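/- Let X be a topological space and let I be a sheaf of abelian groups on X which is an injective object in the category of sheaves of abelian groups on X. Then I is flabby: for every open subset U ⊆ X, the restriction homomorphism Γ(X; I) → Γ(U; I) is surjective. -/

import Mathlib

open CategoryTheory Limits TopologicalSpace Opposite

universe u

/-!
Sections of a sheaf `I` over `V` are the morphisms into `I` from the free sheaf of abelian groups
on `V`, the sheafification of `yoneda.obj V ⋙ AddCommGrpCat.free`. A monomorphism `U ⟶ V`, such as
an inclusion of opens, induces a monomorphism of free sheaves, because the Yoneda embedding, the
free functor and sheafification all preserve monomorphisms. For injective `I`, every morphism from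
the free sheaf on `U` thus extends to the free sheaf on `V`, i.e. every section over `U` extends
to one over `V`.
-/

noncomputable section

namespace CategoryTheory.Sheaf

variable {C : Type u} [Category.{u} C] (J : GrothendieckTopology C)
  [HasWeakSheafify J AddCommGrpCat.{u}]

abbrev freeAddCommGrp (V : C) : Sheaf J AddCommGrpCat.{u} :=
  (presheafToSheaf J _).obj (yoneda.obj V ⋙ AddCommGrpCat.free)

abbrev freeAddCommGrpMap {U V : C} (f : U ⟶ V) : freeAddCommGrp J U ⟶ freeAddCommGrp J V :=
  (presheafToSheaf J _).map (Functor.whiskerRight (yoneda.map f) AddCommGrpCat.free)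

instance mono_freeAddCommGrpMap {U V : C} (f : U ⟶ V) [Mono f] :
    Mono (freeAddCommGrpMap J f) := by
  have : Mono (Functor.whiskerRight (yoneda.map f) AddCommGrpCat.free) :=
    NatTrans.mono_of_mono_app _
  exact (presheafToSheaf J _).map_mono _

def freeAddCommGrpHomEquiv (V : C) (I : Sheaf J AddCommGrpCat.{u}) :
    (freeAddCommGrp J V ⟶ I) ≃ (I.obj ⋙ forget AddCommGrpCat).obj (op V) :=
  ((sheafificationAdjunction J AddCommGrpCat).homEquiv _ I).trans
    (((AddCommGrpCat.adj.whiskerRight Cᵒᵖ).homEquiv (yoneda.obj V) I.obj).trans yonedaEquiv)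

lemma freeAddCommGrpHomEquiv_comp {U V : C} (f : U ⟶ V) (I : Sheaf J AddCommGrpCat.{u})
    (φ : freeAddCommGrp J V ⟶ I) :
    freeAddCommGrpHomEquiv J U I (freeAddCommGrpMap J f ≫ φ) =
      (I.obj ⋙ forget AddCommGrpCat).map f.op (freeAddCommGrpHomEquiv J V I φ) := by
  simp only [freeAddCommGrpHomEquiv, Equiv.trans_apply]
  rw [Adjunction.homEquiv_naturality_left]
  erw [Adjunction.homEquiv_naturality_left]
  exact (yonedaEquiv_naturality _ f).symm

lemma surjective_map_of_injective {I : Sheaf J AddCommGrpCat.{u}} [Injective I]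
    {U V : C} (f : U ⟶ V) [Mono f] : Function.Surjective (I.obj.map f.op) := by
  intro s
  obtain ⟨φ, hφ⟩ :=
    Injective.factors ((freeAddCommGrpHomEquiv J U I).symm s) (freeAddCommGrpMap J f)
  refine ⟨freeAddCommGrpHomEquiv J V I φ, ?_⟩
  have := freeAddCommGrpHomEquiv_comp J f I φ
  rw [hφ, Equiv.apply_symm_apply] at this
  exact this.symm

end CategoryTheory.Sheaf

end

theorem injective_sheaf_is_flabby (X : TopCat.{u})
    (I : Sheaf (Opens.grothendieckTopology X) AddCommGrpCat.{u})
    (hI : Injective I) (U : Opens X) :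
    Function.Surjective (I.val.map (homOfLE (le_top : U ≤ ⊤)).op) :=
  Sheaf.surjective_map_of_injective _ _
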